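/- (Optimal discriminatory reward, Eq. (6)) Under Assumption 1 and with μ > 0, t > 0, s > 0, the matrix 2I + 2μtK is invertible, and the reward vector r* = (2I + 2μtK)^{-1}{ μ[s·1 − 2tK(a − c·1)] − (a − c·1) } is a global maximizer of the discriminatory-reward revenue Π(r) = μ(s·1ᵀx − t·xᵀx) − rᵀx with x = K(a + r − c·1); that is, Π(r) ≤ Π(r*) for all r ∈ ℝ^N. -/

import Mathlib

/-!
A symmetric `G ≥ 0` with row sums below `dᵢ` is dominated by `diagonal d` as a quadratic form
(`2xᵢxⱼ ≤ xᵢ² + xⱼ²`), so `B - G`, `K` and `M = 2I + 2μtK` are positive definite.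
For symmetric `K` the revenue is an exact quadratic around any `r₀`:
`Π(r₀ + e) = Π(r₀) + eᵀK w(r₀) - μt‖Ke‖² - eᵀKe`, and `w(r*) = 0` is precisely the
first-order condition `M r* = μ(s·1 - 2tK(a - c·1)) - (a - c·1)`.
-/

open Matrix

section DiagonalDominance

variable {n : Type*} [Fintype n]

theorem dotProduct_mulVec_le_sum_rowSum_mul_sq {G : Matrix n n ℝ} (hG : G.IsHermitian)
    (hG₀ : ∀ i j, 0 ≤ G i j) (x : n → ℝ) :
    x ⬝ᵥ G *ᵥ x ≤ ∑ i, (∑ j, G i j) * x i ^ 2 := by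
  have hswap : ∑ i, ∑ j, G i j * x j ^ 2 = ∑ i, ∑ j, G i j * x i ^ 2 := by
    rw [Finset.sum_comm]
    exact Finset.sum_congr rfl fun i _ => Finset.sum_congr rfl fun j _ => by
      rw [← hG.apply j i, star_trivial]
  calc x ⬝ᵥ G *ᵥ x = ∑ i, ∑ j, G i j * (x i * x j) := by
        simp only [dotProduct, mulVec, Finset.mul_sum]
        exact Finset.sum_congr rfl fun i _ => Finset.sum_congr rfl fun j _ => by ring
    _ ≤ ∑ i, ∑ j, G i j * ((x i ^ 2 + x j ^ 2) / 2) := by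
        gcongr with i _ j _
        · exact hG₀ i j
        · nlinarith [sq_nonneg (x i - x j)]
    _ = (∑ i, ∑ j, G i j * x i ^ 2 + ∑ i, ∑ j, G i j * x j ^ 2) / 2 := by
        simp only [← Finset.sum_add_distrib, Finset.sum_div]
        exact Finset.sum_congr rfl fun i _ => Finset.sum_congr rfl fun j _ => by ring
    _ = ∑ i, (∑ j, G i j) * x i ^ 2 := by
        rw [hswap, add_self_div_two]
        simp only [Finset.sum_mul]

theorem posDef_diagonal_sub_of_sum_lt [DecidableEq n] {d : n → ℝ} {G : Matrix n n ℝ}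
    (hG : G.IsHermitian) (hG₀ : ∀ i j, 0 ≤ G i j) (hd : ∀ i, ∑ j, G i j < d i) :
    (diagonal d - G).PosDef := by
  refine .of_dotProduct_mulVec_pos ((isHermitian_diagonal d).sub hG) fun x hx => ?_
  obtain ⟨k, hk⟩ := Function.ne_iff.mp hx
  have hpos : 0 < ∑ i, (d i - ∑ j, G i j) * x i ^ 2 :=
    Finset.sum_pos' (fun i _ => mul_nonneg (sub_nonneg.2 (hd i).le) (sq_nonneg _))
      ⟨k, Finset.mem_univ k, mul_pos (sub_pos.2 (hd k)) (pow_two_pos_of_ne_zero hk)⟩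
  have hquad : star x ⬝ᵥ (diagonal d - G) *ᵥ x = ∑ i, d i * x i ^ 2 - x ⬝ᵥ G *ᵥ x := by
    rw [star_trivial, sub_mulVec, dotProduct_sub]
    simp only [dotProduct, mulVec_diagonal]
    congr 1
    exact Finset.sum_congr rfl fun i _ => by ring
  rw [hquad]
  simp only [sub_mul, Finset.sum_sub_distrib] at hpos
  linarith [dotProduct_mulVec_le_sum_rowSum_mul_sq hG hG₀ x]

end DiagonalDominance

section Revenue

variable {n : Type*} [Fintype n]

theorem dotProduct_mulVec_comm_of_isHermitian {K : Matrix n n ℝ} (hK : K.IsHermitian)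
    (u v : n → ℝ) : u ⬝ᵥ K *ᵥ v = v ⬝ᵥ K *ᵥ u := by
  rw [dotProduct_mulVec, ← mulVec_transpose, ← conjTranspose_eq_transpose_of_trivial, hK.eq,
    dotProduct_comm]

/-- The paper's `Π(r)`, with `d` standing for `a - c·1`. -/
def discriminatoryRevenue (K : Matrix n n ℝ) (μ s t : ℝ) (d r : n → ℝ) : ℝ :=
  μ * (s * (1 ⬝ᵥ K *ᵥ (d + r)) - t * (K *ᵥ (d + r)) ⬝ᵥ K *ᵥ (d + r)) - r ⬝ᵥ K *ᵥ (d + r)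

/-- The vector `w` with `K *ᵥ w` the gradient of `discriminatoryRevenue K μ s t d` at `r`. -/
def stationarityResidual (K : Matrix n n ℝ) (μ s t : ℝ) (d r : n → ℝ) : n → ℝ :=
  (μ * s) • 1 - (2 * μ * t) • K *ᵥ (d + r) - (d + r) - r

theorem discriminatoryRevenue_add {K : Matrix n n ℝ} (hK : K.IsHermitian) (μ s t : ℝ)
    (d r e : n → ℝ) :
    discriminatoryRevenue K μ s t d (r + e) = discriminatoryRevenue K μ s t d r
      + e ⬝ᵥ K *ᵥ stationarityResidual K μ s t d r
      - μ * t * (K *ᵥ e) ⬝ᵥ K *ᵥ e - e ⬝ᵥ K *ᵥ e := by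
  have hsplit : K *ᵥ (d + (r + e)) = K *ᵥ (d + r) + K *ᵥ e := by rw [← add_assoc, mulVec_add]
  simp only [discriminatoryRevenue, stationarityResidual, hsplit, mulVec_sub, mulVec_smul,
    dotProduct_sub, dotProduct_smul, smul_eq_mul]
  rw [dotProduct_mulVec_comm_of_isHermitian hK e 1,
    dotProduct_mulVec_comm_of_isHermitian hK e (K *ᵥ (d + r)),
    dotProduct_mulVec_comm_of_isHermitian hK e r]
  generalize K *ᵥ (d + r) = x
  simp only [dotProduct_add, add_dotProduct, dotProduct_comm (K *ᵥ e) x]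
  ring

theorem discriminatoryRevenue_le_of_stationarityResidual_eq_zero {K : Matrix n n ℝ}
    (hK : K.PosSemidef) {μ s t : ℝ} (hμt : 0 ≤ μ * t) {d r₀ : n → ℝ}
    (h₀ : stationarityResidual K μ s t d r₀ = 0) (r : n → ℝ) :
    discriminatoryRevenue K μ s t d r ≤ discriminatoryRevenue K μ s t d r₀ := by
  have hexp := discriminatoryRevenue_add hK.isHermitian μ s t d r₀ (r - r₀)
  rw [add_sub_cancel, h₀, mulVec_zero, dotProduct_zero, add_zero] at hexp
  have hKe : 0 ≤ (r - r₀) ⬝ᵥ K *ᵥ (r - r₀) := by simpa using hK.dotProduct_mulVec_nonneg (r - r₀)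
  have hsq := mul_nonneg hμt (dotProduct_star_self_nonneg (K *ᵥ (r - r₀)))
  rw [star_trivial] at hsq
  linarith

theorem stationarityResidual_eq_zero_of_mulVec_eq [DecidableEq n] {K : Matrix n n ℝ}
    {μ s t : ℝ} {d r₀ : n → ℝ}
    (h : ((2 : ℝ) • (1 : Matrix n n ℝ) + (2 * μ * t) • K) *ᵥ r₀
      = (μ * s) • 1 - (2 * μ * t) • K *ᵥ d - d) :
    stationarityResidual K μ s t d r₀ = 0 := by
  rw [add_mulVec, smul_mulVec, one_mulVec, smul_mulVec] at h
  rw [stationarityResidual, mulVec_add, smul_add]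
  linear_combination (norm := module) -h

end Revenue

theorem stmt8_general (N : ℕ)
    (a b : Fin N → ℝ) (c : ℝ)
    (G : Matrix (Fin N) (Fin N) ℝ)
    (hGsym : ∀ i j, G i j = G j i)
    (hGnonneg : ∀ i j, 0 ≤ G i j)
    (hA : ∀ i, ∑ j, G i j < 2 * b i)
    (B : Matrix (Fin N) (Fin N) ℝ)
    (hB : B = Matrix.diagonal (fun i => 2 * b i))
    (μ s t : ℝ) (hμ : 0 < μ) (ht : 0 < t)
    (K : Matrix (Fin N) (Fin N) ℝ) (hK : K = (B - G)⁻¹)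
    (Rev : (Fin N → ℝ) → ℝ)
    (hRev : ∀ r : Fin N → ℝ,
      Rev r = μ * (s * ∑ i, (K *ᵥ (fun j => a j + r j - c)) i
                  - t * ∑ i, ((K *ᵥ (fun j => a j + r j - c)) i) ^ 2)
              - ∑ i, r i * (K *ᵥ (fun j => a j + r j - c)) i)
    (M : Matrix (Fin N) (Fin N) ℝ)
    (hM : M = (2 : ℝ) • (1 : Matrix (Fin N) (Fin N) ℝ) + (2 * μ * t) • K)
    (rstar : Fin N → ℝ)
    (hrstar : rstar
      = M⁻¹ *ᵥ (fun i => μ * (s - 2 * t * (K *ᵥ (fun j => a j - c)) i) - (a i - c))) :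
    IsUnit M ∧ ∀ r : Fin N → ℝ, Rev r ≤ Rev rstar := by
  set d : Fin N → ℝ := fun j => a j - c
  have hG : G.IsHermitian := IsHermitian.ext fun i j => by simp [hGsym]
  have hKpd : K.PosDef := hK ▸ hB ▸ (posDef_diagonal_sub_of_sum_lt hG hGnonneg hA).inv
  have hMpd : M.PosDef :=
    hM ▸ (PosDef.one.smul two_pos).add_posSemidef (hKpd.posSemidef.smul (by positivity))
  have hRev' : ∀ r, Rev r = discriminatoryRevenue K μ s t d r := fun r => by
    have harg : (fun j => a j + r j - c) = d + r := funext fun j => add_sub_right_comm _ _ _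
    simp [hRev, discriminatoryRevenue, harg, dotProduct, sq]
  have hfoc : M *ᵥ rstar = (μ * s) • 1 - (2 * μ * t) • K *ᵥ d - d := by
    rw [hrstar, mulVec_mulVec, mul_nonsing_inv _ ((isUnit_iff_isUnit_det M).1 hMpd.isUnit),
      one_mulVec]
    funext i
    simp only [Pi.sub_apply, Pi.smul_apply, Pi.one_apply, smul_eq_mul, d]
    ring
  refine ⟨hMpd.isUnit, fun r => ?_⟩
  rw [hRev', hRev']
  exact discriminatoryRevenue_le_of_stationarityResidual_eq_zero hKpd.posSemidef
    (by positivity) (stationarityResidual_eq_zero_of_mulVec_eq (hM ▸ hfoc)) r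

/-- Optimal discriminatory reward (Eq. (6)): `2I + 2μtK` is invertible and
`r* = (2I + 2μtK)⁻¹ { μ [s·1 − 2tK(a − c·1)] − (a − c·1) }` globally maximizes the
discriminatory-reward revenue. -/
theorem stmt8 (N : ℕ) (hN : 1 ≤ N)
    (a b : Fin N → ℝ) (c : ℝ) (hb : ∀ i, 0 < b i)
    (G : Matrix (Fin N) (Fin N) ℝ)
    (hGsym : ∀ i j, G i j = G j i)
    (hGnonneg : ∀ i j, 0 ≤ G i j)
    (hGdiag : ∀ i, G i i = 0)
    (hA : ∀ i, ∑ j, G i j < 2 * b i)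
    (B : Matrix (Fin N) (Fin N) ℝ)
    (hB : B = Matrix.diagonal (fun i => 2 * b i))
    (μ s t : ℝ) (hμ : 0 < μ) (hs : 0 < s) (ht : 0 < t)
    (K : Matrix (Fin N) (Fin N) ℝ) (hK : K = (B - G)⁻¹)
    (Rev : (Fin N → ℝ) → ℝ)
    (hRev : ∀ r : Fin N → ℝ,
      Rev r = μ * (s * ∑ i, (K *ᵥ (fun j => a j + r j - c)) i
                  - t * ∑ i, ((K *ᵥ (fun j => a j + r j - c)) i) ^ 2)
              - ∑ i, r i * (K *ᵥ (fun j => a j + r j - c)) i)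
    (M : Matrix (Fin N) (Fin N) ℝ)
    (hM : M = (2 : ℝ) • (1 : Matrix (Fin N) (Fin N) ℝ) + (2 * μ * t) • K)
    (rstar : Fin N → ℝ)
    (hrstar : rstar
      = M⁻¹ *ᵥ (fun i => μ * (s - 2 * t * (K *ᵥ (fun j => a j - c)) i) - (a i - c))) :
    IsUnit M ∧ ∀ r : Fin N → ℝ, Rev r ≤ Rev rstar :=
  stmt8_general N a b c G hGsym hGnonneg hA B hB μ s t hμ ht K hK Rev hRev M hM rstar hrstar
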